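/- arXiv:1610.10044 — 2 statements merged into one kernel-verified Lean document; each statement's English description precedes it below -/
import Mathlib

section
/- Let E be the category with two objects a, b and exactly two non-identity morphisms, both from a to b (the walking parallel pair), and let D be the free category on the graph with vertices (0,0), (0,1), (1,0), (1,1) and edges (0,0)→(0,1), (0,1)→(1,1), (0,0)→(1,0), (1,0)→(1,1). Consider the functors: E → D sending the two parallel morphisms to the two length-two composites (0,0)→(0,1)→(1,1) and (0,0)→(1,0)→(1,1) respectively; E → [1] sending both parallel morphisms to the unique non-identity morphism of [1]; D → [1]×[1] the evident functor sending each generating edge to the corresponding morphism of the product category; and [1] → [1]×[1] the diagonal. Then the resulting commutative square is a pushout square in the category Cat of small categories and functors. -/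
open CategoryTheory CategoryTheory.Limits

/-- The vertices of the square graph. -/
inductive SqV : Type
  | v00 | v01 | v10 | v11
  deriving DecidableEq

/-- The four edges of the square graph:
`(0,0) ⟶ (0,1)`, `(0,1) ⟶ (1,1)`, `(0,0) ⟶ (1,0)`, `(1,0) ⟶ (1,1)`. -/
inductive SqE : SqV → SqV → Type
  | a : SqE SqV.v00 SqV.v01
  | b : SqE SqV.v01 SqV.v11
  | c : SqE SqV.v00 SqV.v10
  | d : SqE SqV.v10 SqV.v11

instance : Quiver SqV := ⟨SqE⟩

/-- `D`: the free category on the square graph. -/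
abbrev SqFree := CategoryTheory.Paths SqV

/-- The functor `E ⥤ D` from the walking parallel pair to the free category on the
square graph, sending the two parallel arrows to the two length-two composites
`(0,0) ⟶ (0,1) ⟶ (1,1)` and `(0,0) ⟶ (1,0) ⟶ (1,1)`. -/
def pairToSq : WalkingParallelPair ⥤ SqFree :=
  parallelPair
    ((Quiver.Hom.toPath SqE.a :
        (Paths.of SqV).obj SqV.v00 ⟶ (Paths.of SqV).obj SqV.v01) ≫ Quiver.Hom.toPath SqE.b)
    ((Quiver.Hom.toPath SqE.c :
        (Paths.of SqV).obj SqV.v00 ⟶ (Paths.of SqV).obj SqV.v10) ≫ Quiver.Hom.toPath SqE.d)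

/-- The functor `E ⥤ [1]` sending both parallel arrows to the non-identity arrow. -/
def pairToOne : WalkingParallelPair ⥤ Fin 2 :=
  parallelPair (homOfLE (by decide : (0 : Fin 2) ≤ 1)) (homOfLE (by decide : (0 : Fin 2) ≤ 1))

/-- The evident functor `D ⥤ [1] × [1]` sending each generating edge of the square graph
to the corresponding morphism of the product category. -/
def sqToProd : SqFree ⥤ (Fin 2) × (Fin 2) :=
  Paths.lift
    { obj := fun v => match v with
        | SqV.v00 => (0, 0)
        | SqV.v01 => (0, 1)
        | SqV.v10 => (1, 0)
        | SqV.v11 => (1, 1)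
      map := fun e => match e with
        | SqE.a => (𝟙 _, homOfLE (by decide))
        | SqE.b => (homOfLE (by decide), 𝟙 _)
        | SqE.c => (homOfLE (by decide), 𝟙 _)
        | SqE.d => (𝟙 _, homOfLE (by decide)) }

/-- The diagonal functor `[1] ⥤ [1] × [1]`. -/
def oneToProd : Fin 2 ⥤ (Fin 2) × (Fin 2) := Functor.diag (Fin 2)

/-!
Because `E ⥤ [1]` is bijective on objects and merely identifies the two parallel arrows, the
pushout of any category `D` along it is the quotient of `D` by the relation identifying the
images of those arrows; here that relation is `a ≫ b = c ≫ d`. In this quotient the four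
generating edges form a commutative square, so they define a functor from `[1] × [1]`, which is
inverse to the functor induced by `sqToProd`.
-/

namespace CategoryTheory

instance prod_isThin {C D : Type*} [Category C] [Category D] [Quiver.IsThin C]
    [Quiver.IsThin D] : Quiver.IsThin (C × D) :=
  fun _ _ => ⟨fun _ _ => Prod.ext (Subsingleton.elim _ _) (Subsingleton.elim _ _)⟩

lemma Functor.ext_of_isThin {C D : Type*} [Category C] [Category D] [Quiver.IsThin D]
    {F G : C ⥤ D} (h : ∀ X, F.obj X = G.obj X) : F = G :=
  Functor.ext h fun _ _ _ => Subsingleton.elim _ _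

inductive ParallelRel {D : Type*} [Category D] {X Y : D} (f g : X ⟶ Y) : HomRel D
  | rel : ParallelRel f g f g

namespace ParallelRel

section

variable {D : Type*} [Category D] {X Y : D} (f g : X ⟶ Y)

section

variable {C : Type*} [Category C] (F : D ⥤ C) (h : F.map f = F.map g)

def lift : Quotient (ParallelRel f g) ⥤ C :=
  Quotient.lift _ F (by rintro _ _ _ _ ⟨⟩; exact h)

lemma functor_comp_lift : Quotient.functor (ParallelRel f g) ⋙ lift f g F h = F :=
  Quotient.lift_spec _ _ _

lemma lift_unique (Φ : Quotient (ParallelRel f g) ⥤ C)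
    (hΦ : Quotient.functor (ParallelRel f g) ⋙ Φ = F) : Φ = lift f g F h :=
  Quotient.lift_unique _ _ _ _ hΦ

end

lemma parallelPair_comp_functor : parallelPair f g ⋙ Quotient.functor (ParallelRel f g) =
    pairToOne ⋙ ComposableArrows.mk₁ ((Quotient.functor (ParallelRel f g)).map f) := by
  refine Functor.ext (by rintro (_ | _) <;> rfl) ?_
  rintro _ _ (_ | _ | ⟨_ | _⟩)
  case right =>
    exact (Quotient.sound _ .rel).symm.trans ((Category.id_comp _).trans (Category.comp_id _)).symm
  all_goals exact ((Category.id_comp _).trans (Category.comp_id _)).symm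

variable {f g} {C : Type*} [Category C] {F : D ⥤ C} {G : Fin 2 ⥤ C}

lemma map_eq_map_of_comp_eq (h : parallelPair f g ⋙ F = pairToOne ⋙ G) : F.map f = F.map g :=
  (Functor.congr_hom h .left).trans (Functor.congr_hom h .right).symm

lemma mk₁_comp_lift_of_comp_eq (h : parallelPair f g ⋙ F = pairToOne ⋙ G) :
    ComposableArrows.mk₁ ((Quotient.functor (ParallelRel f g)).map f) ⋙
      lift f g F (map_eq_map_of_comp_eq h) = G :=
  ComposableArrows.ext₁ (Functor.congr_obj h .zero) (Functor.congr_obj h .one)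
    (Functor.congr_hom h .left)

end

theorem isPushout_quotient {D : Type} [SmallCategory D] {X Y : D} (f g : X ⟶ Y) :
    IsPushout (parallelPair f g).toCatHom pairToOne.toCatHom
      (Quotient.functor (ParallelRel f g)).toCatHom
      (ComposableArrows.mk₁ ((Quotient.functor (ParallelRel f g)).map f) : Fin 2 ⥤ _).toCatHom := by
  have hs (s : PushoutCocone (parallelPair f g).toCatHom pairToOne.toCatHom) :
      parallelPair f g ⋙ s.inl.toFunctor = pairToOne ⋙ s.inr.toFunctor :=
    congrArg Cat.Hom.toFunctor s.condition
  refine IsPushout.of_isColimit (PushoutCocone.IsColimit.mk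
    (congrArg Functor.toCatHom (parallelPair_comp_functor f g))
    (fun s => (lift f g _ (map_eq_map_of_comp_eq (hs s))).toCatHom)
    (fun s => Cat.ext (functor_comp_lift f g _ (map_eq_map_of_comp_eq (hs s))))
    (fun s => Cat.ext (mk₁_comp_lift_of_comp_eq (hs s)))
    (fun s m hl _ => Cat.ext
      (lift_unique f g _ (map_eq_map_of_comp_eq (hs s)) _ (congrArg Cat.Hom.toFunctor hl))))

end ParallelRel

end CategoryTheory

abbrev SqFree.edge {x y : SqV} (e : SqE x y) : (Paths.of SqV).obj x ⟶ (Paths.of SqV).obj y :=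
  Quiver.Hom.toPath e

open SqFree

abbrev SqQuotient := Quotient (ParallelRel (edge .a ≫ edge .b) (edge .c ≫ edge .d))

namespace SqQuotient

abbrev mk : SqFree ⥤ SqQuotient := Quotient.functor _

-- The commuting square of generators, read as a morphism from the arrow `a` to the arrow `d`.
def fromProd : Fin 2 × Fin 2 ⥤ SqQuotient :=
  Functor.uncurry.obj <| ComposableArrows.mk₁ <|
    ComposableArrows.homMk₁ (F := ComposableArrows.mk₁ (mk.map (edge .a)))
      (G := ComposableArrows.mk₁ (mk.map (edge .d))) (mk.map (edge .c)) (mk.map (edge .b))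
      ((mk.map_comp _ _).symm.trans
        ((CategoryTheory.Quotient.sound _ ParallelRel.rel).trans (mk.map_comp _ _)))

def toProd : SqQuotient ⥤ Fin 2 × Fin 2 :=
  ParallelRel.lift _ _ sqToProd (Subsingleton.elim _ _)

lemma sqToProd_comp_fromProd : sqToProd ⋙ fromProd = mk := by
  refine Paths.ext_functor (funext fun v => by cases v <;> rfl) ?_
  rintro _ _ (_ | _ | _ | _) <;> rfl

lemma fromProd_comp_toProd : fromProd ⋙ toProd = 𝟭 _ :=
  Functor.ext_of_isThin (by rintro ⟨i, j⟩; fin_cases i <;> fin_cases j <;> rfl)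

lemma mk_comp_toProd : mk ⋙ toProd = sqToProd :=
  ParallelRel.functor_comp_lift _ _ _ _

lemma toProd_comp_fromProd : toProd ⋙ fromProd = 𝟭 _ :=
  Quotient.lift_unique' _ _ _ <| by
    rw [← Functor.assoc, mk_comp_toProd, sqToProd_comp_fromProd, Functor.comp_id]

lemma mk₁_comp_toProd :
    (ComposableArrows.mk₁ (mk.map (edge .a ≫ edge .b)) : Fin 2 ⥤ _) ⋙ toProd = oneToProd :=
  Functor.ext_of_isThin fun i => by fin_cases i <;> rfl

def isoProd : Cat.of SqQuotient ≅ Cat.of (Fin 2 × Fin 2) where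
  hom := toProd.toCatHom
  inv := fromProd.toCatHom
  hom_inv_id := Cat.ext toProd_comp_fromProd
  inv_hom_id := Cat.ext fromProd_comp_toProd

end SqQuotient

/-- The square
```
E ──→ D
│     │
↓     ↓
[1] ─→ [1] × [1]
```
(with `E` the walking parallel pair, `D` the free category on the square graph, and the
four functors as described) is a pushout square in `Cat`. -/
theorem stmt2 :
    IsPushout (Z := Cat.of WalkingParallelPair) (X := Cat.of SqFree)
      (Y := Cat.of (Fin 2)) (P := Cat.of ((Fin 2) × (Fin 2)))
      pairToSq.toCatHom pairToOne.toCatHom sqToProd.toCatHom oneToProd.toCatHom :=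
  (ParallelRel.isPushout_quotient _ _).of_iso (Iso.refl _) (Iso.refl _) (Iso.refl _)
    SqQuotient.isoProd rfl rfl (Cat.ext SqQuotient.mk_comp_toProd)
    (Cat.ext SqQuotient.mk₁_comp_toProd)
end

section
/- For any category C, equip the hyperbolic category Hyp(C) := C × Cᵒᵖ with the strict duality sending an object (X, Y) to (Y, X) and a morphism (f, g) to (g, f). Then the strict fixed-point category of the induced involution on the twisted arrow category Tw(Hyp(C)) (sending an object φ to φ^∨ and a morphism (u,v) to (v^∨,u^∨)) is isomorphic to the twisted arrow category Tw(C). -/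
open CategoryTheory Opposite

universe v u

/-- The twisted arrow category of a category `C`: objects are morphisms `f : A ⟶ B` of `C`. -/
structure Tw (C : Type u) [Category.{v} C] where
  left : C
  right : C
  hom : left ⟶ right

/-- A morphism in the twisted arrow category from `f : A ⟶ B` to `g : C' ⟶ D'` is a pair
`(u : A ⟶ C', v : D' ⟶ B)` with `u ≫ g ≫ v = f`. -/
@[ext]
structure TwHom {C : Type u} [Category.{v} C] (f g : Tw C) where
  u : f.left ⟶ g.left
  v : g.right ⟶ f.right
  w : u ≫ g.hom ≫ v = f.hom := by aesop_cat

instance {C : Type u} [Category.{v} C] : Category (Tw C) where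
  Hom := TwHom
  id f := ⟨𝟙 _, 𝟙 _, by simp⟩
  comp {f g h} a b := ⟨a.u ≫ b.u, b.v ≫ a.v, by
    simp only [Category.assoc]
    slice_lhs 2 4 => rw [b.w]
    exact a.w⟩

section
variable {C : Type u} [Category.{v} C]

@[simp] lemma Tw.id_u (f : Tw C) : (𝟙 f : TwHom f f).u = 𝟙 f.left := rfl
@[simp] lemma Tw.id_v (f : Tw C) : (𝟙 f : TwHom f f).v = 𝟙 f.right := rfl
@[simp] lemma Tw.comp_u {f g h : Tw C} (a : f ⟶ g) (b : g ⟶ h) :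
    (a ≫ b).u = a.u ≫ b.u := rfl
@[simp] lemma Tw.comp_v {f g h : Tw C} (a : f ⟶ g) (b : g ⟶ h) :
    (a ≫ b).v = b.v ≫ a.v := rfl

end

/-- The strict involution on the twisted arrow category induced by a (strict) duality
functor `P : Dᵒᵖ ⥤ D`, sending `f : A ⟶ B` to `f^∨ : B^∨ ⟶ A^∨` and `(u, v)` to
`(v^∨, u^∨)`. -/
def twDual {D : Type u} [Category.{v} D] (P : Dᵒᵖ ⥤ D) : Tw D ⥤ Tw D where
  obj f := ⟨P.obj (op f.right), P.obj (op f.left), P.map f.hom.op⟩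
  map {f g} a :=
    { u := P.map a.v.op
      v := P.map a.u.op
      w := by
        simp only [← P.map_comp, ← op_comp, Category.assoc]
        rw [a.w] }

/-- The strict fixed-point category of an endofunctor `T` of `C`: objects are objects `X`
with `T.obj X = X`, morphisms are morphisms `u` with `T.map u = u` (modulo the transport
along the object equalities). -/
def Fixed {C : Type u} [Category.{v} C] (T : C ⥤ C) := {X : C // T.obj X = X}

instance {C : Type u} [Category.{v} C] (T : C ⥤ C) : Category (Fixed T) where
  Hom X Y := {u : X.1 ⟶ Y.1 // T.map u = eqToHom X.2 ≫ u ≫ eqToHom Y.2.symm}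
  id X := ⟨𝟙 _, by simp⟩
  comp {X Y Z} a b := ⟨a.1 ≫ b.1, by simp [a.2, b.2]⟩

variable (C : Type u) [Category.{v} C]

/-- The swap duality on the hyperbolic category `Hyp C = C × Cᵒᵖ`, sending `(X, Y)` to
`(Y, X)` and `(f, g)` to `(g, f)`. -/
def hypSwap : (C × Cᵒᵖ)ᵒᵖ ⥤ C × Cᵒᵖ where
  obj Z := (Z.unop.2.unop, op Z.unop.1)
  map φ := (φ.unop.2.unop, φ.unop.1.op)

/-! A twisted arrow `(f, g) : (A, B) ⟶ (A', B')` of `C × Cᵒᵖ` is fixed by the involution exactly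
when `B = op A'`, `B' = op A` and `g = f.op`, so it is determined by `f`; likewise a fixed
morphism `((u₁, u₂), (v₁, v₂))` has `u₂ = v₁.op` and `v₂ = u₁.op`. Projecting to the first
factor is therefore inverse to `f ↦ (f, f.op)`. -/

def fixedToTw : Fixed (twDual (hypSwap C)) ⥤ Tw C where
  obj f := ⟨f.1.left.1, f.1.right.1, f.1.hom.1⟩
  map a := ⟨a.1.u.1, a.1.v.1, congrArg Prod.fst a.1.w⟩

def twToFixed : Tw C ⥤ Fixed (twDual (hypSwap C)) where
  obj t := ⟨⟨(t.left, op t.right), (t.right, op t.left), (t.hom, t.hom.op)⟩, rfl⟩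
  map {s t} a := ⟨⟨(a.u, a.v.op), (a.v, a.u.op), Prod.ext a.w (by
      change a.v.op ≫ t.hom.op ≫ a.u.op = s.hom.op
      rw [← op_comp, ← op_comp, Category.assoc, a.w])⟩,
    ((Category.id_comp _).trans (Category.comp_id _)).symm⟩

lemma twToFixed_obj_surjective : Function.Surjective (twToFixed C).obj := by
  rintro ⟨⟨⟨A, B⟩, ⟨A', B'⟩, ⟨a, b⟩⟩, hf⟩
  simp only [twDual, hypSwap, Tw.mk.injEq, Prod.mk.injEq, Quiver.Hom.unop_op] at hf
  obtain ⟨⟨rfl, rfl⟩, -, rfl, -⟩ := hf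
  exact ⟨⟨B'.unop, A', b.unop⟩, rfl⟩

lemma twToFixed_map_fixedToTw_map {s t : Tw C} (m : (twToFixed C).obj s ⟶ (twToFixed C).obj t) :
    (twToFixed C).map ((fixedToTw C).map m) = m := by
  -- Between objects of the form `(twToFixed C).obj s` the transport `eqToHom`s are `𝟙` by `rfl`.
  have hm : (twDual (hypSwap C)).map m.1 = m.1 :=
    (m.2 : _ = 𝟙 _ ≫ m.1 ≫ 𝟙 _).trans ((Category.id_comp _).trans (Category.comp_id _))
  refine Subtype.ext (TwHom.ext (Prod.ext rfl ?_) (Prod.ext rfl ?_))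
  · exact congrArg (fun a => a.u.2) hm
  · exact congrArg (fun a => a.v.2) hm

lemma fixedToTw_comp_twToFixed : fixedToTw C ⋙ twToFixed C = 𝟭 _ := by
  refine CategoryTheory.Functor.ext (fun f => ?_) (fun f g m => ?_)
  · obtain ⟨t, rfl⟩ := twToFixed_obj_surjective C f
    rfl
  · obtain ⟨s, rfl⟩ := twToFixed_obj_surjective C f
    obtain ⟨t, rfl⟩ := twToFixed_obj_surjective C g
    exact (twToFixed_map_fixedToTw_map C m).trans
      ((Category.id_comp _).trans (Category.comp_id _)).symm

/-- For any category `C`, the swap duality on the hyperbolic category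
`Hyp C := C × Cᵒᵖ` is a strict duality, and the strict fixed-point category of the induced
involution on the twisted arrow category `Tw (Hyp C)` is isomorphic to the twisted arrow
category `Tw C`. -/
theorem stmt4 :
    (hypSwap C).rightOp ⋙ hypSwap C = 𝟭 (C × Cᵒᵖ) ∧
    ∃ (F : Fixed (twDual (hypSwap C)) ⥤ Tw C) (G : Tw C ⥤ Fixed (twDual (hypSwap C))),
      F ⋙ G = 𝟭 (Fixed (twDual (hypSwap C))) ∧ G ⋙ F = 𝟭 (Tw C) :=
  ⟨rfl, fixedToTw C, twToFixed C, fixedToTw_comp_twToFixed C, rfl⟩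
end
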